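/- Let p ∈ [0,1), let μ := NB(1,p) and ν := NB(2,p), and set m := ⌊p/(1−p)⌋. Then ‖μ − ν‖_TV = Σ_{k=0}^{m} (μ(k) − ν(k)) = (m+1)·(1−p)·p^{m+1}. Moreover, if p = m/(m+1) for some m ∈ ℕ₀, this value equals p^{1/(1−p)}. -/

import Mathlib

/-!
The difference of the two mass functions factors as `p^k (1-p) (p - k(1-p))`, so it is
nonnegative exactly up to `m = ⌊p/(1-p)⌋` and nonpositive afterwards. Both laws have total
mass one, so by Scheffé's identity the total variation distance is the positive mass
`Σ_{k ≤ m} (μ(k) - ν(k))`, and this partial sum telescopes to `(m+1)(1-p)p^{m+1}`.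
For `p = m/(m+1)` one has `1/(1-p) = m+1`.
-/

open Finset

section TotalVariation

variable {α : Type*} {μ ν : α → ℝ} {S : Set α}

theorem abs_tsum_subtype_sub_le (hμ : Summable μ) (hν : Summable ν)
    (hsum : ∑' k, μ k = ∑' k, ν k) (hS : ∀ k ∈ S, ν k ≤ μ k) (hSc : ∀ k ∉ S, μ k ≤ ν k)
    (A : Set α) : |∑' k : A, μ k - ∑' k : A, ν k| ≤ ∑' k : S, (μ k - ν k) := by
  set d := fun k => μ k - ν k
  have hd : Summable d := hμ.sub hν
  have hd0 : ∑' k, d k = 0 := by rw [hμ.tsum_sub hν, hsum, sub_self]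
  have hcompl : ∑' k, Sᶜ.indicator d k = -∑' k, S.indicator d k := by
    rw [eq_neg_iff_add_eq_zero, add_comm, ← (hd.indicator S).tsum_add (hd.indicator Sᶜ)]
    simp only [Set.indicator_self_add_compl_apply]
    exact hd0
  have hA : ∑' k : A, μ k - ∑' k : A, ν k = ∑' k : A, d k :=
    ((hμ.subtype A).tsum_sub (hν.subtype A)).symm
  rw [hA, tsum_subtype A d, tsum_subtype S d, abs_le, ← hcompl]
  -- Pointwise, `Sᶜ.indicator d ≤ A.indicator d ≤ S.indicator d`.
  constructor <;> refine (hd.indicator _).tsum_le_tsum (fun k => ?_) (hd.indicator _) <;>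
    by_cases hk : k ∈ S <;> by_cases hkA : k ∈ A <;> simp [hk, hkA, d, hS k, hSc k]

/-- Scheffé's identity. -/
theorem iSup_abs_tsum_subtype_sub_eq (hμ : Summable μ) (hν : Summable ν)
    (hsum : ∑' k, μ k = ∑' k, ν k) (hS : ∀ k ∈ S, ν k ≤ μ k) (hSc : ∀ k ∉ S, μ k ≤ ν k) :
    ⨆ A : Set α, |∑' k : A, μ k - ∑' k : A, ν k| = ∑' k : S, (μ k - ν k) := by
  have hle := abs_tsum_subtype_sub_le hμ hν hsum hS hSc
  refine le_antisymm (ciSup_le hle) (le_ciSup_of_le ⟨_, Set.forall_mem_range.2 hle⟩ S ?_)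
  exact ((hμ.subtype S).tsum_sub (hν.subtype S)).trans_le (le_abs_self _)

end TotalVariation

section NegBinomial

variable {p : ℝ}

theorem hasSum_negBinomial_one (hp : |p| < 1) : HasSum (fun k : ℕ => p ^ k * (1 - p)) 1 := by
  have h1p : 1 - p ≠ 0 := by linarith [le_abs_self p]
  simpa [h1p] using (hasSum_geometric_of_abs_lt_one hp).mul_right (1 - p)

theorem hasSum_negBinomial_two (hp : |p| < 1) :
    HasSum (fun k : ℕ => ((k : ℝ) + 1) * p ^ k * (1 - p) ^ 2) 1 := by
  have h1p : 1 - p ≠ 0 := by linarith [le_abs_self p]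
  have := (hasSum_choose_mul_geometric_of_norm_lt_one 1 (r := p) (by simpa using hp)).mul_right
    ((1 - p) ^ 2)
  simpa [h1p] using this

theorem negBinomial_one_sub_two (p : ℝ) (k : ℕ) :
    p ^ k * (1 - p) - ((k : ℝ) + 1) * p ^ k * (1 - p) ^ 2
      = p ^ k * (1 - p) * (p - k * (1 - p)) := by
  ring

theorem sum_range_negBinomial_one_sub_two (p : ℝ) (n : ℕ) :
    ∑ k ∈ range n, (p ^ k * (1 - p) - ((k : ℝ) + 1) * p ^ k * (1 - p) ^ 2)
      = n * (1 - p) * p ^ n := by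
  induction n with
  | zero => simp
  | succ n ih =>
    rw [sum_range_succ, ih]
    push_cast
    ring

theorem le_floor_div_one_sub_iff (hp0 : 0 ≤ p) (hp1 : p < 1) (k : ℕ) :
    k ≤ ⌊p / (1 - p)⌋₊ ↔ k * (1 - p) ≤ p := by
  rw [Nat.le_floor_iff (div_nonneg hp0 (by linarith)), le_div_iff₀ (by linarith)]

theorem negBinomial_two_le_one_of_le_floor (hp0 : 0 ≤ p) (hp1 : p < 1) {k : ℕ}
    (hk : k ≤ ⌊p / (1 - p)⌋₊) : ((k : ℝ) + 1) * p ^ k * (1 - p) ^ 2 ≤ p ^ k * (1 - p) := by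
  rw [← sub_nonneg, negBinomial_one_sub_two]
  have := (le_floor_div_one_sub_iff hp0 hp1 k).1 hk
  have : 0 < 1 - p := by linarith
  exact mul_nonneg (by positivity) (by linarith)

theorem negBinomial_one_le_two_of_floor_lt (hp0 : 0 ≤ p) (hp1 : p < 1) {k : ℕ}
    (hk : ⌊p / (1 - p)⌋₊ < k) : p ^ k * (1 - p) ≤ ((k : ℝ) + 1) * p ^ k * (1 - p) ^ 2 := by
  rw [← sub_nonpos, negBinomial_one_sub_two]
  have := mt (le_floor_div_one_sub_iff hp0 hp1 k).2 hk.not_ge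
  have : 0 < 1 - p := by linarith
  exact mul_nonpos_of_nonneg_of_nonpos (by positivity) (by linarith)

theorem one_sub_natCast_div_add_one (m : ℕ) : 1 - (m / (m + 1) : ℝ) = 1 / (m + 1) := by
  field_simp
  ring

theorem floor_natCast_div_add_one_div_one_sub (m : ℕ) :
    ⌊(m / (m + 1) : ℝ) / (1 - m / (m + 1))⌋₊ = m := by
  have : (m / (m + 1) : ℝ) / (1 / (m + 1)) = m := by field_simp
  rw [one_sub_natCast_div_add_one, this, Nat.floor_natCast]

end NegBinomial

theorem tv_negBinomial_one_two (p : ℝ) (hp : p ∈ Set.Ico (0 : ℝ) 1) :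
    (⨆ A : Set ℕ,
        |(∑' k : A, p ^ (k : ℕ) * (1 - p)) -
          ∑' k : A, (((k : ℕ) : ℝ) + 1) * p ^ (k : ℕ) * (1 - p) ^ 2|)
      = ∑ k ∈ Finset.range (⌊p / (1 - p)⌋₊ + 1),
          (p ^ k * (1 - p) - ((k : ℝ) + 1) * p ^ k * (1 - p) ^ 2) ∧
    (⨆ A : Set ℕ,
        |(∑' k : A, p ^ (k : ℕ) * (1 - p)) -
          ∑' k : A, (((k : ℕ) : ℝ) + 1) * p ^ (k : ℕ) * (1 - p) ^ 2|)
      = ((⌊p / (1 - p)⌋₊ : ℝ) + 1) * (1 - p) * p ^ (⌊p / (1 - p)⌋₊ + 1) ∧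
    ∀ m : ℕ, p = (m : ℝ) / ((m : ℝ) + 1) →
      ((⌊p / (1 - p)⌋₊ : ℝ) + 1) * (1 - p) * p ^ (⌊p / (1 - p)⌋₊ + 1)
        = p ^ ((1 : ℝ) / (1 - p)) := by
  obtain ⟨hp0, hp1⟩ := hp
  have hp : |p| < 1 := by rwa [abs_of_nonneg hp0]
  have hμ := hasSum_negBinomial_one hp
  have hν := hasSum_negBinomial_two hp
  set m := ⌊p / (1 - p)⌋₊
  have htv := iSup_abs_tsum_subtype_sub_eq hμ.summable hν.summable
    (hμ.tsum_eq.trans hν.tsum_eq.symm) (S := ↑(range (m + 1)))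
    (fun k hk => negBinomial_two_le_one_of_le_floor hp0 hp1 (Nat.lt_succ_iff.1 (mem_range.1 hk)))
    (fun k hk => negBinomial_one_le_two_of_floor_lt hp0 hp1 (by simpa using hk))
  replace htv := htv.trans (Finset.tsum_subtype' (range (m + 1))
    fun k : ℕ => p ^ k * (1 - p) - ((k : ℝ) + 1) * p ^ k * (1 - p) ^ 2)
  refine ⟨htv, htv.trans ?_, ?_⟩
  · rw [sum_range_negBinomial_one_sub_two]
    push_cast
    ring
  · rintro n rfl
    rw [show m = n from floor_natCast_div_add_one_div_one_sub n, one_sub_natCast_div_add_one, one_div_one_div,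
      mul_one_div_cancel (by positivity), one_mul, ← Real.rpow_natCast]
    norm_cast
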